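/- Suppose (x⋆, w⋆, u⋆) satisfies: w⋆ = x⋆ − α∇F(x⋆); x⋆ = prox_{αR}(A(w⋆ − √B u⋆)); and √B(w⋆ − √B u⋆) = 0, where F(x) = Σᵢ fᵢ(xᵢ), R(x) = Σᵢ r(xᵢ), each fᵢ is convex and L-smooth, r is proper closed convex, A = Ā⊗I with Ā𝟙 = 𝟙 symmetric, B = B̄⊗I with B̄ ⪰ 0 and null(B̄) = span(𝟙), and α > 0. Then x⋆ = 𝟙⊗x̄ for some x̄ ∈ ℝ^d satisfying 0 ∈ (1/n)Σᵢ ∇fᵢ(x̄) + ∂r(x̄), i.e., x̄ minimizes (1/n)Σᵢ[fᵢ(x) + r(x)]. -/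

import Mathlib

/-!
Since `𝟙` spans `ker B̄ = ker √B̄`, the equation `√B z = 0` forces `z = w − √B u` to be a
consensus vector `𝟙 ⊗ z̄`; as `Ā` is row-stochastic, every node then computes the same
`x̄ = prox_{αr}(z̄)`. Because `√B̄` is symmetric with `√B̄ 𝟙 = 0`, summing `z = w − √B u` over
the nodes removes `√B u` and leaves `n (x̄ − z̄) = α Σᵢ ∇fᵢ(x̄)`. The optimality condition of the
prox says `(z̄ − x̄)/α ∈ ∂r(x̄)`, so `0 ∈ Σᵢ ∇fᵢ(x̄) + n ∂r(x̄)`, which by convexity makes `x̄` a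
global minimizer.
-/

open Matrix

/-- The positive semidefinite square root (the Mathlib definition of December 2024, since removed). -/
noncomputable def Matrix.PosSemidef.sqrt {n : Type*} [Fintype n] [DecidableEq n]
    {A : Matrix n n ℝ} (hA : A.PosSemidef) : Matrix n n ℝ :=
  hA.1.eigenvectorUnitary.1 * diagonal ((↑) ∘ (fun x => Real.sqrt x) ∘ hA.1.eigenvalues) *
    (star hA.1.eigenvectorUnitary : Matrix n n ℝ)

open RealInnerProductSpace Set Filter Topology

namespace Matrix.PosSemidef

variable {n : Type*} [Fintype n] [DecidableEq n] {A : Matrix n n ℝ} (hA : A.PosSemidef)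

theorem sqrt_mul_self : hA.sqrt * hA.sqrt = A := by
  have hU : (star hA.1.eigenvectorUnitary : Matrix n n ℝ) * hA.1.eigenvectorUnitary.1 = 1 :=
    Unitary.star_mul_self_of_mem hA.1.eigenvectorUnitary.2
  have hD : diagonal ((↑) ∘ (fun x => Real.sqrt x) ∘ hA.1.eigenvalues) *
      diagonal ((↑) ∘ (fun x => Real.sqrt x) ∘ hA.1.eigenvalues)
      = diagonal (RCLike.ofReal ∘ hA.1.eigenvalues : n → ℝ) := by
    rw [diagonal_mul_diagonal]
    congr 1 with i
    simp [Real.mul_self_sqrt (hA.eigenvalues_nonneg i)]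
  conv_rhs => rw [hA.1.spectral_theorem, Unitary.conjStarAlgAut_apply, ← hD]
  simp only [PosSemidef.sqrt, Matrix.mul_assoc]
  rw [← Matrix.mul_assoc (star _ : Matrix n n ℝ) _ _, hU, Matrix.one_mul]

theorem transpose_sqrt : hA.sqrtᵀ = hA.sqrt := by
  simp [PosSemidef.sqrt, transpose_mul, Matrix.mul_assoc, Matrix.star_eq_conjTranspose]

theorem sqrt_mulVec_eq_zero_iff (v : n → ℝ) : hA.sqrt *ᵥ v = 0 ↔ A *ᵥ v = 0 := by
  constructor
  · intro hv
    rw [← hA.sqrt_mul_self, ← mulVec_mulVec, hv, mulVec_zero]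
  · intro hv
    -- `‖√A v‖² = vᵀ A v`
    refine dotProduct_self_eq_zero.mp ?_
    rw [dotProduct_mulVec, ← mulVec_transpose, hA.transpose_sqrt, mulVec_mulVec,
      hA.sqrt_mul_self, hv, zero_dotProduct]

end Matrix.PosSemidef

section blockMulVec

variable {R E ι κ : Type*} [Fintype κ]

/-- `M.blockMulVec z` is `(M ⊗ I) z` in the paper's notation, for block vectors `z : κ → E`. -/
def Matrix.blockMulVec [Semiring R] [AddCommMonoid E] [Module R E] (M : Matrix ι κ R)
    (z : κ → E) : ι → E :=
  fun i => ∑ j, M i j • z j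

theorem Matrix.comp_blockMulVec [CommSemiring R] [AddCommMonoid E] [Module R E]
    (φ : Module.Dual R E) (M : Matrix ι κ R) (z : κ → E) :
    φ ∘ M.blockMulVec z = M *ᵥ (φ ∘ z) := by
  ext i
  simp [blockMulVec, mulVec, dotProduct]

theorem Matrix.blockMulVec_const_of_mulVec_one [CommSemiring R] [AddCommMonoid E] [Module R E]
    {M : Matrix ι κ R} (hM : M *ᵥ 1 = 1) (c : E) : M.blockMulVec (fun _ => c) = fun _ => c := by
  ext1 i
  have hrow : ∑ j, M i j = 1 := by simpa [mulVec, dotProduct] using congrFun hM i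
  rw [blockMulVec, ← Finset.sum_smul, hrow, one_smul]

theorem Matrix.sum_blockMulVec_eq_zero [CommSemiring R] [AddCommMonoid E] [Module R E]
    [Fintype ι] {M : Matrix ι κ R} (hM : 1 ᵥ* M = 0) (z : κ → E) :
    ∑ i, M.blockMulVec z i = 0 := by
  have hcol : ∀ j, ∑ i, M i j = 0 := fun j => by simpa [vecMul, dotProduct] using congrFun hM j
  simp only [blockMulVec]
  rw [Finset.sum_comm]
  simp [← Finset.sum_smul, hcol]

theorem Matrix.exists_const_of_blockMulVec_eq_zero [Field R] [AddCommGroup E] [Module R E]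
    {M : Matrix κ κ R} (hker : ∀ v, M *ᵥ v = 0 → ∃ t : R, v = t • 1) {z : κ → E}
    (hz : M.blockMulVec z = 0) : ∃ c, ∀ i, z i = c := by
  rcases isEmpty_or_nonempty κ with _ | ⟨⟨i₀⟩⟩
  · exact ⟨0, isEmptyElim⟩
  · refine ⟨z i₀, fun i => ?_⟩
    rw [← sub_eq_zero, ← Module.forall_dual_apply_eq_zero_iff R]
    intro φ
    obtain ⟨t, ht⟩ := hker (φ ∘ z) (by rw [← comp_blockMulVec, hz]; ext; simp)
    have hφ : ∀ j, φ (z j) = t := fun j => by simpa using congrFun ht j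
    rw [map_sub, hφ, hφ, sub_self]

end blockMulVec

section ConvexOptimality

variable {E : Type*} [NormedAddCommGroup E] [InnerProductSpace ℝ E]

theorem ConvexOn.add_inner_le_of_hasGradientAt [CompleteSpace E] {f : E → ℝ} {G x : E}
    (hf : ConvexOn ℝ univ f) (hG : HasGradientAt f G x) (y : E) :
    f x + ⟪G, y - x⟫ ≤ f y := by
  have hline : ConvexOn ℝ univ (f ∘ AffineMap.lineMap (k := ℝ) x y) := by
    simpa using hf.comp_affineMap (AffineMap.lineMap (k := ℝ) x y)
  have hderiv : HasDerivAt (f ∘ AffineMap.lineMap (k := ℝ) x y) ⟪G, y - x⟫ 0 := by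
    have hG' : HasFDerivAt f (InnerProductSpace.toDual ℝ E G)
        (AffineMap.lineMap x y (0 : ℝ)) := by
      simpa using hG.hasFDerivAt
    simpa using hG'.comp_hasDerivAt (0 : ℝ) AffineMap.hasDerivAt_lineMap
  have := hline.le_slope_of_hasDerivAt (mem_univ 0) (mem_univ 1) one_pos hderiv
  simp only [slope_def_field, Function.comp_apply, AffineMap.lineMap_apply_one,
    AffineMap.lineMap_apply_zero, sub_zero, div_one] at this
  linarith

theorem ConvexOn.add_inner_le_of_isMinOn_prox {r : E → ℝ} (hr : ConvexOn ℝ univ r) {α : ℝ}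
    {x p : E} (hp : IsMinOn (fun s => r s + 1 / (2 * α) * ‖s - x‖ ^ 2) univ p)
    (y : E) : r p + ⟪α⁻¹ • (x - p), y - p⟫ ≤ r y := by
  set c := 1 / (2 * α)
  have hstep : ∀ t : ℝ, 0 < t → t ≤ 1 →
      r p + ⟪α⁻¹ • (x - p), y - p⟫ ≤ r y + t * (c * ‖y - p‖ ^ 2) := by
    intro t ht0 ht1
    have hmin := isMinOn_iff.1 hp (p + t • (y - p)) (mem_univ _)
    have hconv : r (p + t • (y - p)) ≤ (1 - t) * r p + t * r y := by
      have := hr.2 (mem_univ p) (mem_univ y) (by linarith : (0 : ℝ) ≤ 1 - t) ht0.le (by ring)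
      rwa [show (1 - t) • p + t • y = p + t • (y - p) by module] at this
    have hnorm : ‖p + t • (y - p) - x‖ ^ 2
        = ‖p - x‖ ^ 2 + 2 * t * ⟪p - x, y - p⟫ + t ^ 2 * ‖y - p‖ ^ 2 := by
      rw [add_sub_right_comm, norm_add_sq_real, real_inner_smul_right, norm_smul,
        Real.norm_eq_abs, abs_of_pos ht0]
      ring
    have hinner : ⟪α⁻¹ • (x - p), y - p⟫ = -(2 * c * ⟪p - x, y - p⟫) := by
      rw [← neg_sub p x, smul_neg, inner_neg_left, real_inner_smul_left]
      simp only [c]; ring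
    rw [hnorm] at hmin
    rw [hinner]
    nlinarith
  refine ge_of_tendsto (x := 𝓝[>] (0 : ℝ)) (f := fun t => r y + t * (c * ‖y - p‖ ^ 2)) ?_ ?_
  · have hcont : Continuous fun t : ℝ => r y + t * (c * ‖y - p‖ ^ 2) := by fun_prop
    simpa using (hcont.tendsto 0).mono_left nhdsWithin_le_nhds
  · filter_upwards [Ioc_mem_nhdsGT one_pos] with t ⟨ht0, ht1⟩
    exact hstep t ht0 ht1

theorem isMinOn_sum_add_of_sum_gradient_add_subgradient_eq_zero {ι : Type*}
    [CompleteSpace E] [Fintype ι]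
    {f : ι → E → ℝ} {G : ι → E} {r : E → ℝ} {x s : E} (hf : ∀ i, ConvexOn ℝ univ (f i))
    (hG : ∀ i, HasGradientAt (f i) (G i) x) (hs : ∀ y, r x + ⟪s, y - x⟫ ≤ r y)
    (hopt : ∑ i, G i + (Fintype.card ι : ℝ) • s = 0) :
    IsMinOn (fun y => ∑ i, (f i y + r y)) univ x := by
  refine isMinOn_iff.2 fun y _ => ?_
  have hsum : ∑ i, ⟪G i + s, y - x⟫ = 0 := by
    rw [← sum_inner, Finset.sum_add_distrib, Finset.sum_const, Finset.card_univ,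
      ← Nat.cast_smul_eq_nsmul ℝ, hopt, inner_zero_left]
  calc ∑ i, (f i x + r x) = ∑ i, (f i x + r x + ⟪G i + s, y - x⟫) := by
        simp only [Finset.sum_add_distrib, hsum, add_zero]
    _ ≤ ∑ i, (f i y + r y) := Finset.sum_le_sum fun i _ => by
        have := (hf i).add_inner_le_of_hasGradientAt (hG i) y
        rw [inner_add_left]
        linarith [hs y]

end ConvexOptimality

theorem stmt_19_general {d n : ℕ}
    (f : Fin n → EuclideanSpace ℝ (Fin d) → ℝ)
    (g : Fin n → EuclideanSpace ℝ (Fin d) → EuclideanSpace ℝ (Fin d))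
    (hgrad : ∀ i x, HasGradientAt (f i) (g i x) x)
    (hconv : ∀ i, ConvexOn ℝ Set.univ (f i))
    (r : EuclideanSpace ℝ (Fin d) → ℝ)
    (hrconv : ConvexOn ℝ Set.univ r)
    (α : ℝ) (hα : 0 < α)
    (prox : EuclideanSpace ℝ (Fin d) → EuclideanSpace ℝ (Fin d))
    (hprox : ∀ x, IsMinOn (fun s => r s + 1 / (2 * α) * ‖s - x‖ ^ 2) Set.univ (prox x))
    (Abar Bbar : Matrix (Fin n) (Fin n) ℝ)
    (hAone : Abar *ᵥ (1 : Fin n → ℝ) = 1)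
    (hB : Bbar.PosSemidef)
    (hnull : ∀ v : Fin n → ℝ, Bbar *ᵥ v = 0 ↔ ∃ t : ℝ, v = t • (1 : Fin n → ℝ))
    (xs ws us zs : Fin n → EuclideanSpace ℝ (Fin d))
    (hws : ws = fun i => xs i - α • g i (xs i))
    (hzs : zs = fun i => ws i - ∑ j, hB.sqrt i j • us j)
    (hxs : xs = fun i => prox (∑ j, Abar i j • zs j))
    (hfix : (fun i => ∑ j, hB.sqrt i j • zs j) = 0) :
    ∃ xb : EuclideanSpace ℝ (Fin d),
      (∀ i, xs i = xb) ∧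
      IsMinOn (fun x => (1 / (n : ℝ)) * ∑ i, (f i x + r x)) Set.univ xb := by
  obtain ⟨zb, hzb⟩ := exists_const_of_blockMulVec_eq_zero
    (fun v hv => (hnull v).1 ((hB.sqrt_mulVec_eq_zero_iff v).1 hv)) hfix
  obtain rfl : zs = fun _ => zb := funext hzb
  have hxb : ∀ i, xs i = prox zb := fun i => by
    rw [hxs]
    exact congrArg prox (congrFun (blockMulVec_const_of_mulVec_one hAone zb) i)
  refine ⟨prox zb, hxb, ?_⟩
  have hsqrt_one : 1 ᵥ* hB.sqrt = 0 := by
    rw [← mulVec_transpose, hB.transpose_sqrt, hB.sqrt_mulVec_eq_zero_iff]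
    exact (hnull 1).2 ⟨1, (one_smul ℝ _).symm⟩
  have hmean : n • zb = n • prox zb - α • ∑ i, g i (prox zb) := by
    change _ = fun i => ws i - hB.sqrt.blockMulVec us i at hzs
    have := congrArg (fun z => ∑ i, z i) hzs
    simp only [Finset.sum_sub_distrib, sum_blockMulVec_eq_zero hsqrt_one us, hws, hxb] at this
    simpa [Finset.smul_sum] using this
  have hopt : ∑ i, g i (prox zb) + (Fintype.card (Fin n) : ℝ) • α⁻¹ • (zb - prox zb) = 0 := by
    refine smul_right_injective _ hα.ne' ?_
    dsimp only
    rw [smul_add, smul_comm α, smul_inv_smul₀ hα.ne', Fintype.card_fin, Nat.cast_smul_eq_nsmul,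
      smul_sub, hmean, smul_zero]
    abel
  exact (isMinOn_sum_add_of_sum_gradient_add_subgradient_eq_zero hconv (fun i => hgrad i _)
    (hrconv.add_inner_le_of_isMinOn_prox (hprox zb)) hopt).comp_mono
    (monotone_mul_left_of_nonneg (by positivity))

/-- Lemma 1 of FlexATC, fixed-point/KKT characterization. Suppose
`(x⋆, w⋆, u⋆)` satisfies `w⋆ = x⋆ − α∇F(x⋆)`, `x⋆ = prox_{αR}(A(w⋆ − √B u⋆))` and
`√B(w⋆ − √B u⋆) = 0`, where `F(x) = Σᵢ fᵢ(xᵢ)` with each `fᵢ` convex and `L`-smooth,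
`R(x) = Σᵢ r(xᵢ)` with `r` proper closed convex (prox taken blockwise), `A = Ā ⊗ I` with
`Ā` symmetric and `Ā𝟙 = 𝟙`, `B = B̄ ⊗ I` with `B̄ ⪰ 0` and `null(B̄) = span(𝟙)`, and
`α > 0`. Then `x⋆ = 𝟙 ⊗ x̄` for some `x̄` minimizing `(1/n)Σᵢ[fᵢ(x) + r(x)]`. -/
theorem stmt_19 {d n : ℕ}
    (f : Fin n → EuclideanSpace ℝ (Fin d) → ℝ)
    (g : Fin n → EuclideanSpace ℝ (Fin d) → EuclideanSpace ℝ (Fin d))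
    (L : ℝ) (hL : 0 < L)
    (hgrad : ∀ i x, HasGradientAt (f i) (g i x) x)
    (hconv : ∀ i, ConvexOn ℝ Set.univ (f i))
    (hsmooth : ∀ i x y, ‖g i x - g i y‖ ≤ L * ‖x - y‖)
    (r : EuclideanSpace ℝ (Fin d) → ℝ)
    (hrconv : ConvexOn ℝ Set.univ r) (hrlsc : LowerSemicontinuous r)
    (α : ℝ) (hα : 0 < α)
    (prox : EuclideanSpace ℝ (Fin d) → EuclideanSpace ℝ (Fin d))
    (hprox : ∀ x, IsMinOn (fun s => r s + 1 / (2 * α) * ‖s - x‖ ^ 2) Set.univ (prox x))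
    (Abar Bbar : Matrix (Fin n) (Fin n) ℝ)
    (hAsymm : Abarᵀ = Abar)
    (hAone : Abar *ᵥ (1 : Fin n → ℝ) = 1)
    (hB : Bbar.PosSemidef)
    (hnull : ∀ v : Fin n → ℝ, Bbar *ᵥ v = 0 ↔ ∃ t : ℝ, v = t • (1 : Fin n → ℝ))
    (xs ws us zs : Fin n → EuclideanSpace ℝ (Fin d))
    (hws : ws = fun i => xs i - α • g i (xs i))
    (hzs : zs = fun i => ws i - ∑ j, hB.sqrt i j • us j)
    (hxs : xs = fun i => prox (∑ j, Abar i j • zs j))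
    (hfix : (fun i => ∑ j, hB.sqrt i j • zs j) = 0) :
    ∃ xb : EuclideanSpace ℝ (Fin d),
      (∀ i, xs i = xb) ∧
      IsMinOn (fun x => (1 / (n : ℝ)) * ∑ i, (f i x + r x)) Set.univ xb :=
  stmt_19_general f g hgrad hconv r hrconv α hα prox hprox Abar Bbar hAone hB hnull xs ws us zs hws
    hzs hxs hfix
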